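/- arXiv:2412.13392 — 3 statements merged into one kernel-verified Lean document; each statement's English description precedes it below -/
import Mathlib

section
/- Let m = 2k+1 with k ≥ 2. Define the set F_m = {σ₀, …, σ_{m-1}} of permutations of ℤ_m by: σ₀ = id; for i = 2j+1 with 0 ≤ j ≤ k-1, σ_i = γ_i·(m-1, j+2) (composition left-to-right); for i = 2j with 1 ≤ j ≤ k-2, σ_i = γ_i·(m-1, k+j+1); σ_{m-3} = γ_{m-3}·(m-1, 0); and σ_{m-1} is the single m-cycle given by σ_{m-1}(a) = m-a+1 for 3 ≤ a ≤ k, σ_{m-1}(a) = m-a+2 for k+2 ≤ a ≤ m-2, σ_{m-1}(0) = 3, σ_{m-1}(1) = 2, σ_{m-1}(2) = 0, σ_{m-1}(k+1) = m-1, σ_{m-1}(m-1) = 1. Then F_m is a regular permutation set of order m, i.e., for every a ∈ ℤ_m, the images {σ_i(a) : 0 ≤ i ≤ m-1} equal all of ℤ_m. -/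
/-!
Write `m = 2k + 1`, so that `γ` fixes `2k` and rotates `ℤ_{2k}`. For `i < 2k` we have
`σ_i = γ^i · (2k, t_i)` with `t_0 = 2k`, so `σ_i(2k) = t_i` and, for `a < 2k`,
`σ_i(a) = a + i mod 2k` except that the value `t_i` is sent to `2k` when `a + i ≡ t_i`.
The targets `t_i` together with `σ_{2k}(2k) = 1` exhaust `ℤ_m`. The differences `t_i - i`
are pairwise distinct mod `2k` and miss only `k + 1`, so on a column `a < 2k` at most one
shift is displaced to `2k`, and `σ_{2k}(a)` is precisely the value left over: the displaced
`t_i`, or `2k` itself when `a = k + 1`.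
-/

/-- The point `t_i` with `σ_i = γ^i · (2k, t_i)` for `i < 2k`: `t_0 = 2k` gives `σ_0 = id`, and
`i = 2k - 2` is the exceptional index `m - 3`. -/
def swapTarget (k i : ℕ) : ℕ :=
  if i = 0 then 2 * k
  else if i = 2 * k - 2 then 0
  else if i % 2 = 1 then i / 2 + 2
  else k + i / 2 + 1

def shiftSwapImage (k i a : ℕ) : ℕ :=
  if a = 2 * k then swapTarget k i
  else if (a + i) % (2 * k) = swapTarget k i then 2 * k
  else (a + i) % (2 * k)

def lastImage (k a : ℕ) : ℕ :=
  if a = 0 then 3 else if a = 1 then 2 else if a = 2 then 0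
  else if a = k + 1 then 2 * k else if a = 2 * k then 1
  else if a ≤ k then 2 * k + 2 - a else 2 * k + 3 - a

lemma add_mod_eq_ite_of_lt {a i N : ℕ} (ha : a < N) (hi : i < N) :
    (a + i) % N = if a + i < N then a + i else a + i - N := by
  rw [Nat.add_mod_eq_ite, Nat.mod_eq_of_lt ha, Nat.mod_eq_of_lt hi]
  split_ifs <;> omega

lemma eq_of_add_mod_eq_add_mod {a i j N : ℕ} (hi : i < N) (hj : j < N)
    (h : (a + i) % N = (a + j) % N) : i = j :=
  (Nat.ModEq.add_left_cancel' a h).eq_of_lt_of_lt hi hj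

lemma swapTarget_zero (k : ℕ) : swapTarget k 0 = 2 * k := rfl

lemma swapTarget_two_mul_sub_two {k : ℕ} (hk : 2 ≤ k) : swapTarget k (2 * k - 2) = 0 := by
  rw [swapTarget, if_neg (by omega), if_pos rfl]

lemma swapTarget_two_mul_add_one (k j : ℕ) : swapTarget k (2 * j + 1) = j + 2 := by
  rw [swapTarget, if_neg (by omega), if_neg (by omega), if_pos (by omega)]
  omega

lemma swapTarget_two_mul {k j : ℕ} (hj1 : 1 ≤ j) (hj2 : j ≤ k - 2) :
    swapTarget k (2 * j) = k + j + 1 := by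
  rw [swapTarget, if_neg (by omega), if_neg (by omega), if_neg (by omega)]
  omega

lemma swapTarget_le {k i : ℕ} (hi : i < 2 * k) : swapTarget k i ≤ 2 * k := by
  unfold swapTarget; split_ifs <;> omega

lemma swapTarget_injOn {k : ℕ} (hk : 2 ≤ k) : Set.InjOn (swapTarget k) (Set.Iio (2 * k)) := by
  intro i hi j hj h
  simp only [Set.mem_Iio] at hi hj
  unfold swapTarget at h
  split_ifs at h <;> omega

lemma swapTarget_ne_one {k i : ℕ} (hi : i < 2 * k) : swapTarget k i ≠ 1 := by
  unfold swapTarget; split_ifs <;> omega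

/-- `a + i ≡ t_i` means `a ≡ t_i - i`, and these differences are pairwise distinct mod `2k`. -/
lemma eq_of_add_mod_eq_swapTarget {k a i j : ℕ} (ha : a < 2 * k) (hi : i < 2 * k)
    (hj : j < 2 * k) (hai : (a + i) % (2 * k) = swapTarget k i)
    (haj : (a + j) % (2 * k) = swapTarget k j) : i = j := by
  rw [add_mod_eq_ite_of_lt ha hi] at hai
  rw [add_mod_eq_ite_of_lt ha hj] at haj
  unfold swapTarget at hai haj
  split_ifs at hai haj <;> omega

lemma shiftSwapImage_injOn {k a : ℕ} (hk : 2 ≤ k) (ha : a ≤ 2 * k) :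
    Set.InjOn (fun i => shiftSwapImage k i a) (Set.Iio (2 * k)) := by
  intro i hi j hj h
  simp only [Set.mem_Iio] at hi hj
  simp only [shiftSwapImage] at h
  split_ifs at h with haN hti htj htj
  · exact swapTarget_injOn hk hi hj h
  · exact eq_of_add_mod_eq_swapTarget (by omega) hi hj hti htj
  · exact absurd h (Nat.mod_lt _ (by omega)).ne'
  · exact absurd h (Nat.mod_lt _ (by omega)).ne
  · exact eq_of_add_mod_eq_add_mod hi hj h

/-- `σ_{2k}(a)` is the value the `σ_i(a)`, `i < 2k`, miss: the displaced `t_i`, or `2k` when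
`a = k + 1`, the one residue that is not of the form `t_i - i`. -/
lemma lastImage_ne_shiftSwapImage {k a i : ℕ} (hk : 2 ≤ k) (ha : a ≤ 2 * k) (hi : i < 2 * k) :
    lastImage k a ≠ shiftSwapImage k i a := by
  rcases ha.eq_or_lt with rfl | ha
  · rw [lastImage, if_neg (by omega), if_neg (by omega), if_neg (by omega), if_neg (by omega),
      if_pos rfl, shiftSwapImage, if_pos rfl]
    exact (swapTarget_ne_one hi).symm
  · unfold lastImage shiftSwapImage swapTarget
    rw [add_mod_eq_ite_of_lt ha hi]
    split_ifs <;> omega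

theorem bijective_apply_of_apply_val {k : ℕ} (hk : 2 ≤ k)
    (σ : Fin (2 * k + 1) → Equiv.Perm (Fin (2 * k + 1)))
    (hσ : ∀ i a, (σ i a).val = if i.val = 2 * k then lastImage k a else shiftSwapImage k i a)
    (a : Fin (2 * k + 1)) : Function.Bijective (fun i => σ i a) := by
  rw [← Finite.injective_iff_bijective]
  intro i j hij
  have hi := i.isLt
  have hj := j.isLt
  have ha := a.isLt
  have h := congrArg Fin.val hij
  simp only [hσ] at h
  apply Fin.ext
  split_ifs at h with hi' hj' hj'
  · omega
  · exact absurd h (lastImage_ne_shiftSwapImage hk (by omega) (by omega))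
  · exact absurd h.symm (lastImage_ne_shiftSwapImage hk (by omega) (by omega))
  · exact shiftSwapImage_injOn hk (by omega) (Set.mem_Iio.mpr (by omega))
      (Set.mem_Iio.mpr (by omega)) h

section rotation

variable {m : ℕ} {γ : Equiv.Perm (Fin m)}

lemma gamma_pow_apply_val
    (hγ : ∀ x : Fin m, (γ x).val = if x.val = m - 1 then m - 1 else (x.val + 1) % (m - 1))
    (n : ℕ) (x : Fin m) :
    ((γ ^ n) x).val = if x.val = m - 1 then m - 1 else (x.val + n) % (m - 1) := by
  induction n generalizing x with
  | zero =>
    have := x.isLt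
    rw [pow_zero, Equiv.Perm.one_apply, add_zero]
    split_ifs with hx
    · exact hx
    · exact (Nat.mod_eq_of_lt (by omega)).symm
  | succ n ih =>
    have := x.isLt
    rw [pow_succ, Equiv.Perm.mul_apply, ih, hγ]
    by_cases hx : x.val = m - 1
    · simp [hx]
    · have : (x.val + 1) % (m - 1) < m - 1 := Nat.mod_lt _ (by omega)
      rw [if_neg hx, if_neg hx, if_neg this.ne, Nat.mod_add_mod, add_assoc, add_comm 1 n]

lemma gamma_pow_trans_swap_apply_val
    (hγ : ∀ x : Fin m, (γ x).val = if x.val = m - 1 then m - 1 else (x.val + 1) % (m - 1))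
    (i : ℕ) (last t : Fin m) (hlast : last.val = m - 1) (x : Fin m) :
    ((γ ^ i).trans (Equiv.swap last t) x).val =
      if x.val = m - 1 then t.val
      else if (x.val + i) % (m - 1) = t.val then m - 1 else (x.val + i) % (m - 1) := by
  have hγi := gamma_pow_apply_val hγ i x
  rw [Equiv.trans_apply, Equiv.swap_apply_def]
  by_cases hx : x.val = m - 1
  · rw [if_pos (Fin.ext (by rw [hγi, if_pos hx, hlast])), if_pos hx]
  · have hlt : (x.val + i) % (m - 1) < m - 1 := Nat.mod_lt _ (by have := x.isLt; omega)
    rw [if_neg hx] at hγi ⊢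
    rw [if_neg (fun h => by rw [h, hlast] at hγi; omega)]
    simp only [Fin.ext_iff, hγi]
    split_ifs <;> assumption

end rotation

/-- Let `m = 2k+1` with `k ≥ 2`, and let `γ = γ₁ = (0,1,…,m-2)(m-1)`.
Define the family `F_m = {σ₀,…,σ_{m-1}}` of permutations of `ℤ_m` by:
`σ₀ = id`; for `i = 2j+1` with `0 ≤ j ≤ k-1`, `σ_i = γ^i·(m-1, j+2)`
(composition left-to-right); for `i = 2j` with `1 ≤ j ≤ k-2`,
`σ_i = γ^i·(m-1, k+j+1)`; `σ_{m-3} = γ^{m-3}·(m-1, 0)`; and `σ_{m-1}` the single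
`m`-cycle given pointwise below.  Then `F_m` is a regular permutation set of
order `m`: for every `a ∈ ℤ_m` the map `i ↦ σ_i(a)` is a bijection of `ℤ_m`. -/
theorem construction_F_regular (m k : ℕ) (hk : 2 ≤ k) (hm : m = 2 * k + 1)
    (γ : Equiv.Perm (Fin m))
    (hγ : ∀ x : Fin m, (γ x).val = if x.val = m - 1 then m - 1 else (x.val + 1) % (m - 1))
    (σ : Fin m → Equiv.Perm (Fin m))
    (h0 : σ ⟨0, by omega⟩ = 1)
    (hodd : ∀ (j : ℕ) (hj : j ≤ k - 1),
      σ ⟨2 * j + 1, by omega⟩ =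
        (γ ^ (2 * j + 1)).trans (Equiv.swap ⟨m - 1, by omega⟩ ⟨j + 2, by omega⟩))
    (heven : ∀ (j : ℕ) (hj1 : 1 ≤ j) (hj2 : j ≤ k - 2),
      σ ⟨2 * j, by omega⟩ =
        (γ ^ (2 * j)).trans (Equiv.swap ⟨m - 1, by omega⟩ ⟨k + j + 1, by omega⟩))
    (hm3 : σ ⟨m - 3, by omega⟩ =
        (γ ^ (m - 3)).trans (Equiv.swap ⟨m - 1, by omega⟩ ⟨0, by omega⟩))
    (hlast : ∀ a : Fin m, ((σ ⟨m - 1, by omega⟩) a).val =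
        if a.val = 0 then 3
        else if a.val = 1 then 2
        else if a.val = 2 then 0
        else if a.val = k + 1 then m - 1
        else if a.val = m - 1 then 1
        else if a.val ≤ k then m - a.val + 1
        else m - a.val + 2) :
    ∀ a : Fin m, Function.Bijective (fun i : Fin m => (σ i) a) := by
  subst hm
  have hshift : ∀ (i : ℕ) (hi : i < 2 * k), σ ⟨i, by omega⟩ =
      (γ ^ i).trans (Equiv.swap ⟨2 * k + 1 - 1, by omega⟩
        ⟨swapTarget k i, Nat.lt_succ_of_le (swapTarget_le hi)⟩) := by
    intro i hi
    obtain rfl | hi0 := eq_or_ne i 0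
    · simp only [h0, swapTarget_zero, Nat.add_sub_cancel, Equiv.swap_self, pow_zero]
      rfl
    obtain rfl | hi3 := eq_or_ne i (2 * k - 2)
    · rw [show (⟨2 * k - 2, _⟩ : Fin _) = ⟨2 * k + 1 - 3, by omega⟩ from
        Fin.ext (show 2 * k - 2 = 2 * k + 1 - 3 by omega), hm3]
      simp only [show 2 * k + 1 - 3 = 2 * k - 2 by omega, swapTarget_two_mul_sub_two hk]
    rcases Nat.even_or_odd' i with ⟨j, rfl | rfl⟩
    · simp only [heven j (by omega) (by omega),
        swapTarget_two_mul (k := k) (j := j) (by omega) (by omega)]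
    · simp only [hodd j (by omega), swapTarget_two_mul_add_one k j]
  refine bijective_apply_of_apply_val hk σ fun i a => ?_
  split_ifs with hi
  · rw [show i = ⟨2 * k + 1 - 1, by omega⟩ from Fin.ext hi, hlast]
    simp only [lastImage]
    split_ifs <;> omega
  · rw [hshift i (by omega), gamma_pow_trans_swap_apply_val hγ _ _ _ rfl]
    simp only [shiftSwapImage, Nat.add_sub_cancel]
end

section
/- Let m ≥ 4 be even and let π = (0,1,…,m-1) be the cyclic shift on ℤ_m. Then the permutation (1, m-2)·π^{-2} (transposition of 1 and m-2 followed by the inverse square of the shift) is a single m-cycle. -/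
/-!
Away from `1` and `m - 2` the permutation is `x ↦ x - 2`, whose two orbits on `ℤ_m` (`m` even)
are the odd and the even residues; the transposition joins them into the single cycle
`0 → m-2 → m-1 → m-3 → ⋯ → 1 → m-4 → m-6 → ⋯ → 2 → 0`. Every odd `y` lies on the descending
chain from `m - 1`, every even `y ≠ m - 2` on the one from `m - 4`, and `m - 2 ↦ m - 1`,
`1 ↦ m - 4` link the two chains.
-/

open Equiv Equiv.Perm

theorem Equiv.Perm.sameCycle_of_apply_eq_succ {α : Type*} (f : Perm α) (g : ℕ → α) (n : ℕ)
    (h : ∀ i < n, f (g i) = g (i + 1)) : f.SameCycle (g 0) (g n) := by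
  induction n with
  | zero => exact .refl _ _
  | succ n ih =>
    rw [← h n n.lt_succ_self]
    exact sameCycle_apply_right.2 (ih fun i hi => h i (by omega))

theorem Nat.add_one_mod_eq_ite {a m : ℕ} (ha : a < m) :
    (a + 1) % m = if a + 1 = m then 0 else a + 1 := by
  split_ifs with h
  · rw [h, Nat.mod_self]
  · exact Nat.mod_eq_of_lt (by omega)

/-- The values of `(1, m-2) · π⁻²` on `{0, …, m - 1}`. -/
def swapShiftVal (m x : ℕ) : ℕ :=
  if x = 1 then m - 4 else if x = m - 2 then m - 1 else if x = 0 then m - 2 else x - 2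

theorem val_swap_trans_shift_inv_sq {m : ℕ} (hm : 4 ≤ m) (π : Perm (Fin m))
    (hπ : ∀ x : Fin m, (π x).val = (x.val + 1) % m) {a b : Fin m} (ha : a.val = 1)
    (hb : b.val = m - 2) (x : Fin m) :
    (((swap a b).trans (π ^ (-2 : ℤ))) x).val = swapShiftVal m x.val := by
  have hlt : swapShiftVal m x.val < m := by unfold swapShiftVal; split_ifs <;> omega
  suffices h : swap a b x = π (π ⟨_, hlt⟩) by
    rw [trans_apply, zpow_neg, zpow_ofNat, inv_eq_iff_eq.2 (by rwa [pow_two, mul_apply])]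
  have hx := x.isLt
  have hlt' : (if swapShiftVal m x.val + 1 = m then 0 else swapShiftVal m x.val + 1) < m := by
    split_ifs <;> omega
  apply Fin.ext
  rw [hπ, hπ, Nat.add_one_mod_eq_ite hlt, Nat.add_one_mod_eq_ite hlt', swap_apply_def]
  simp only [Fin.ext_iff, swapShiftVal, apply_ite Fin.val, ha, hb]
  split_ifs <;> omega

section

variable {m : ℕ} {σ : Perm (Fin m)} (hσ : ∀ x : Fin m, (σ x).val = swapShiftVal m x.val)
include hσ

theorem apply_ne_self_of_val_eq_swapShiftVal (heven : Even m) (x : Fin m) : σ x ≠ x := by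
  obtain ⟨K, hK⟩ := heven
  intro h
  have hx := hσ x
  rw [h, swapShiftVal] at hx
  split_ifs at hx <;> omega

theorem sameCycle_of_val_eq_swapShiftVal_of_even_sub (a : ℕ) (ha : a < m) (ha₂ : a ≠ m - 2)
    (y : Fin m) (hya : y.val ≤ a) (hpar : Even (a - y.val)) : σ.SameCycle ⟨a, ha⟩ y := by
  obtain ⟨j, hj⟩ := hpar
  have hchain := sameCycle_of_apply_eq_succ σ (fun i => (⟨a - 2 * i, by omega⟩ : Fin m)) j
    fun i hi => Fin.ext <| by
      simp only [hσ, swapShiftVal]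
      split_ifs <;> omega
  convert hchain using 1 <;> ext <;> simp only <;> omega

theorem sameCycle_last_of_val_eq_swapShiftVal (hm : 4 ≤ m) (heven : Even m) (y : Fin m) :
    σ.SameCycle ⟨m - 1, by omega⟩ y := by
  have hstep (a b : Fin m) (h : swapShiftVal m a.val = b.val) : σ.SameCycle a b :=
    Fin.ext ((hσ a).trans h) ▸ sameCycle_apply_right.2 .rfl
  have hdescend := sameCycle_of_val_eq_swapShiftVal_of_even_sub hσ
  obtain ⟨K, hK⟩ := heven
  have hy := y.isLt
  by_cases hy₂ : y.val = m - 2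
  · exact (hstep _ _ (by simp only [swapShiftVal]; split_ifs <;> omega)).symm
  rcases Nat.even_or_odd y.val with ⟨k, hk⟩ | ⟨k, hk⟩
  · have hlast_one :=
      hdescend (m - 1) (by omega) (by omega) ⟨1, by omega⟩ (by simp only; omega)
        ⟨K - 1, by simp only; omega⟩
    have hone := hstep ⟨1, by omega⟩ ⟨m - 4, by omega⟩ (by simp [swapShiftVal])
    exact hlast_one.trans <| hone.trans <|
      hdescend (m - 4) (by omega) (by omega) y (by omega) ⟨K - 2 - k, by omega⟩
  · exact hdescend (m - 1) (by omega) (by omega) y (by omega) ⟨K - 1 - k, by omega⟩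

theorem isCycle_of_val_eq_swapShiftVal (hm : 4 ≤ m) (heven : Even m) : σ.IsCycle :=
  ⟨_, apply_ne_self_of_val_eq_swapShiftVal hσ heven _,
    fun y _ => sameCycle_last_of_val_eq_swapShiftVal hσ hm heven y⟩

theorem support_eq_univ_of_val_eq_swapShiftVal (heven : Even m) : σ.support = Finset.univ :=
  Finset.eq_univ_of_forall fun x =>
    mem_support.2 (apply_ne_self_of_val_eq_swapShiftVal hσ heven x)

end

/-- Let `m ≥ 4` be even and `π = (0,1,…,m-1)` the cyclic shift on
`ℤ_m`.  The permutation `(1, m-2)·π^{-2}` (transposition of `1` and `m-2` first,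
then the inverse square of the shift, composition left-to-right) is a single
`m`-cycle. -/
theorem swap_mul_shift_inv_sq_isCycle (m : ℕ) (hm : 4 ≤ m) (heven : Even m)
    (π : Equiv.Perm (Fin m)) (hπ : ∀ x : Fin m, (π x).val = (x.val + 1) % m) :
    Equiv.Perm.IsCycle
      ((Equiv.swap (⟨1, by omega⟩ : Fin m) ⟨m - 2, by omega⟩).trans (π ^ (-2 : ℤ))) ∧
    Equiv.Perm.support
      ((Equiv.swap (⟨1, by omega⟩ : Fin m) ⟨m - 2, by omega⟩).trans (π ^ (-2 : ℤ))) =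
      Finset.univ := by
  have hσ := val_swap_trans_shift_inv_sq hm π hπ
    (a := ⟨1, by omega⟩) (b := ⟨m - 2, by omega⟩) rfl rfl
  exact ⟨isCycle_of_val_eq_swapShiftVal hσ hm heven,
    support_eq_univ_of_val_eq_swapShiftVal hσ heven⟩
end

section
/- Let m ≥ 5 be odd with k = (m-1)/2, and let γ₋₁ be the inverse of γ₁ = (0,1,…,m-2)(m-1) ∈ S_m. Then the permutation (m-1, k+1)·γ₋₁ (transposition first, then γ₋₁; composition left-to-right) is a single m-cycle, explicitly (0, m-2, m-3, …, k+1, m-1, k, k-1, …, 1). -/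
/-
Away from `0`, `k + 1` and `m - 1` the permutation `τ` is the descent `a ↦ a - 1`, so each of
the intervals `[0, k]` and `[k + 1, m - 2]` lies in a single cycle of `τ`; the cycle of `k + 1`
also contains `τ (k + 1) = m - 1` and `τ (m - 1) = k`, which joins the two intervals and the point
`m - 1` into one cycle. Since `τ` has no fixed point, that cycle is all of `Fin m`.
-/

open Equiv Equiv.Perm

theorem Equiv.Perm.sameCycle_of_apply_val_add_one {n : ℕ} {σ : Perm (Fin n)} {lo hi : ℕ}
    (hσ : ∀ a : Fin n, lo < a.val → a.val ≤ hi → (σ a).val + 1 = a.val)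
    (a b : Fin n) (hlo : lo ≤ b.val) (hba : b.val ≤ a.val) (hhi : a.val ≤ hi) :
    σ.SameCycle a b := by
  induction hd : a.val - b.val generalizing a with
  | zero => rw [Fin.ext (by omega : a.val = b.val)]
  | succ d ih =>
    have hstep := hσ a (by omega) hhi
    exact sameCycle_apply_left.mp (ih (σ a) (by omega) (by omega) (by omega))

theorem Equiv.Perm.isCycle_and_support_eq_univ {α : Type*} [Fintype α] [DecidableEq α]
    {σ : Perm α} (x : α) (hfix : ∀ y, σ y ≠ y) (hx : ∀ y, σ.SameCycle x y) :
    σ.IsCycle ∧ σ.support = Finset.univ :=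
  ⟨⟨x, hfix x, fun y _ => hx y⟩, Finset.eq_univ_of_forall fun y => mem_support.mpr (hfix y)⟩

theorem val_inv_apply_of_rotation {m : ℕ} (hm : 2 ≤ m) {γ : Perm (Fin m)}
    (hγ : ∀ x : Fin m, (γ x).val = if x.val = m - 1 then m - 1 else (x.val + 1) % (m - 1))
    (x : Fin m) :
    (γ⁻¹ x).val = if x.val = m - 1 then m - 1 else if x.val = 0 then m - 2 else x.val - 1 := by
  obtain ⟨z, rfl⟩ := γ.surjective x
  rw [Perm.inv_def, symm_apply_apply, hγ z]
  have hz := z.isLt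
  by_cases hlast : z.val = m - 1
  · simp [hlast]
  by_cases hwrap : z.val + 1 = m - 1
  · rw [if_neg hlast, ← hwrap, Nat.mod_self, if_neg (by omega), if_pos rfl]; omega
  · rw [if_neg hlast, Nat.mod_eq_of_lt (by omega)]
    simp only [if_neg hwrap, Nat.add_eq_zero_iff, one_ne_zero, and_false, if_false]
    omega

theorem val_swap_trans_inv_rotation_apply {m k : ℕ} (hkm : k + 2 < m)
    {γ : Perm (Fin m)}
    (hγ : ∀ x : Fin m, (γ x).val = if x.val = m - 1 then m - 1 else (x.val + 1) % (m - 1))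
    {a b : Fin m} (ha : a.val = m - 1) (hb : b.val = k + 1) (x : Fin m) :
    ((swap a b).trans γ⁻¹ x).val =
      if x.val = k + 1 then m - 1 else if x.val = m - 1 then k
      else if x.val = 0 then m - 2 else x.val - 1 := by
  rw [trans_apply, val_inv_apply_of_rotation (by omega) hγ, swap_apply_def]
  split_ifs <;> simp_all [Fin.ext_iff]

theorem sameCycle_zero_of_val_apply {m k : ℕ} (hkm : k + 2 < m) {σ : Perm (Fin m)}
    (hσ : ∀ x : Fin m, (σ x).val =
      if x.val = k + 1 then m - 1 else if x.val = m - 1 then k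
      else if x.val = 0 then m - 2 else x.val - 1)
    (y : Fin m) : σ.SameCycle ⟨0, by omega⟩ y := by
  have hlow := σ.sameCycle_of_apply_val_add_one (lo := 0) (hi := k)
    (fun a _ _ => by rw [hσ]; split_ifs <;> omega)
  have hhigh := σ.sameCycle_of_apply_val_add_one (lo := k + 1) (hi := m - 2)
    (fun a _ _ => by rw [hσ]; split_ifs <;> omega)
  have hσk1 : σ ⟨k + 1, by omega⟩ = ⟨m - 1, by omega⟩ := Fin.ext (by simp [hσ])
  have hσm1 : σ ⟨m - 1, by omega⟩ = ⟨k, by omega⟩ := Fin.ext (by simp [hσ]; omega)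
  have hk1_k : σ.SameCycle ⟨k + 1, by omega⟩ ⟨k, by omega⟩ := by
    rw [← hσm1, ← hσk1, sameCycle_apply_right, sameCycle_apply_right]
  have h0_k1 : σ.SameCycle ⟨0, by omega⟩ ⟨k + 1, by omega⟩ :=
    (hk1_k.trans (hlow _ _ le_rfl (Nat.zero_le k) le_rfl)).symm
  rcases Nat.lt_or_ge k y.val with hy | hy
  · rcases Nat.lt_or_ge y.val (m - 1) with hy' | hy'
    · exact h0_k1.trans (hhigh y ⟨k + 1, by omega⟩ le_rfl hy (by omega)).symm
    · rw [show y = σ ⟨k + 1, by omega⟩ from Fin.ext (by simp [hσ]; omega), sameCycle_apply_right]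
      exact h0_k1
  · exact (hlow y _ le_rfl (Nat.zero_le _) hy).symm

/-- Let `m = 2k+1 ≥ 5` be odd (so `k = (m-1)/2`) and `γ₋₁` the inverse
of `γ₁ = (0,1,…,m-2)(m-1)`.  The permutation `(m-1, k+1)·γ₋₁` (transposition
first, then `γ₋₁`; left-to-right) is a single `m`-cycle, explicitly
`(0, m-2, m-3, …, k+1, m-1, k, k-1, …, 1)`. -/
theorem swap_gamma_inv_single_cycle (m k : ℕ) (hm : 5 ≤ m)
    (hk : m = 2 * k + 1)
    (γ : Equiv.Perm (Fin m))
    (hγ : ∀ x : Fin m, (γ x).val = if x.val = m - 1 then m - 1 else (x.val + 1) % (m - 1))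
    (τ : Equiv.Perm (Fin m))
    (hτ : τ = (Equiv.swap (⟨m - 1, by omega⟩ : Fin m) ⟨k + 1, by omega⟩).trans γ⁻¹) :
    τ ⟨0, by omega⟩ = ⟨m - 2, by omega⟩ ∧
    τ ⟨k + 1, by omega⟩ = ⟨m - 1, by omega⟩ ∧
    τ ⟨m - 1, by omega⟩ = ⟨k, by omega⟩ ∧
    (∀ (a : Fin m) (h0 : a.val ≠ 0) (h1 : a.val ≠ k + 1) (h2 : a.val ≠ m - 1),
      τ a = ⟨a.val - 1, by omega⟩) ∧
    τ.IsCycle ∧ τ.support = Finset.univ := by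
  have hτ_val (x : Fin m) := hτ ▸ val_swap_trans_inv_rotation_apply (by omega) hγ rfl rfl x
  refine ⟨Fin.ext (by simp [hτ_val]; omega), Fin.ext (by simp [hτ_val]),
    Fin.ext (by simp [hτ_val]; omega), fun a h0 h1 h2 => Fin.ext (by simp [hτ_val, h0, h1, h2]), ?_⟩
  refine isCycle_and_support_eq_univ ⟨0, by omega⟩ (fun x hx => ?_)
    (sameCycle_zero_of_val_apply (by omega) hτ_val)
  have hx_val := hτ_val x
  rw [hx] at hx_val
  split_ifs at hx_val <;> omega
end
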